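/- In the construction of the previous WVC reduction: if X is a vertex cover of G^F with w_F(X) ≤ k_F = (n/2 − |F|)(k+2) + k, then |X ∩ V₁^F| = n/2 − |F| and |X ∩ V₂^F| ≤ n/2 − |F| + k. -/

import Mathlib

def PerfM {V : Type*} (G : SimpleGraph V) (M : Set (Sym2 V)) : Prop :=
  M ⊆ G.edgeSet ∧ ∀ v : V, ∃! e, e ∈ M ∧ v ∈ e

def GF {V : Type*} (G : SimpleGraph V) (F : Finset (Sym2 V)) :
    SimpleGraph ({v : V // ∀ e ∈ F, v ∉ e} ⊕ V) where
  Adj x y :=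
    match x, y with
    | Sum.inl a, Sum.inl b => G.Adj a.1 b.1
    | Sum.inl a, Sum.inr b => a.1 = b
    | Sum.inr a, Sum.inl b => b.1 = a
    | Sum.inr a, Sum.inr b => G.Adj a b
  symm := by
    refine ⟨?_⟩
    rintro (a | a) (b | b) h
    · exact h.symm
    · exact h
    · exact h
    · exact h.symm
  loopless := by
    refine ⟨?_⟩
    rintro (a | a) h
    · exact G.loopless.irrefl a.1 h
    · exact G.loopless.irrefl a h


/-!
A vertex cover meets every edge of a matching in distinct vertices. In `G^F` the edges of
`M \ F` form a matching of `n/2 - |F|` edges among the left copies (weight `k + 1`) and the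
edges of `M` one of `n/2` edges among the right copies (weight `1`), so `X` has at least
`n/2 - |F|` left and `n/2` right vertices. These already use all but `n/2 - |F| + k - n/2 ≤ k`
of the budget `k_F`, too little for another left vertex, and what is left bounds the right part.
-/

open Finset

theorem Set.PairwiseDisjoint.card_le_card_of_forall_exists_mem {ι α : Type*} {s : Finset ι}
    {t : ι → Finset α} (hst : (s : Set ι).PairwiseDisjoint t) (c : Finset α)
    (hc : ∀ i ∈ s, ∃ a ∈ c, a ∈ t i) : #s ≤ #c :=
  card_le_card_of_forall_subsingleton (fun i a => a ∈ t i) hc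
    fun a _ _ ⟨hi, hai⟩ _ ⟨hj, haj⟩ => hst.elim_finset hi hj a hai haj

theorem Finset.card_filter_isLeft {α β : Type*} (u : Finset (α ⊕ β)) :
    #(u.filter fun x => x.isLeft = true) = #u.toLeft := by
  rw [← card_map (Function.Embedding.inl : α ↪ α ⊕ β)]
  congr 1
  ext (a | b) <;> simp

theorem Finset.card_filter_isRight {α β : Type*} (u : Finset (α ⊕ β)) :
    #(u.filter fun x => x.isRight = true) = #u.toRight := by
  rw [← card_map (Function.Embedding.inr : β ↪ α ⊕ β)]
  congr 1
  ext (a | b) <;> simp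

namespace PerfM

variable {V : Type*} {G : SimpleGraph V} {M : Finset (Sym2 V)}

theorem eq_of_mem_of_mem (hM : PerfM G ↑M) {v : V} {e₁ e₂ : Sym2 V} (he₁ : e₁ ∈ M)
    (he₂ : e₂ ∈ M) (hv₁ : v ∈ e₁) (hv₂ : v ∈ e₂) : e₁ = e₂ :=
  (hM.2 v).unique ⟨he₁, hv₁⟩ ⟨he₂, hv₂⟩

theorem pairwiseDisjoint_toFinset [DecidableEq V] (hM : PerfM G ↑M) :
    (M : Set (Sym2 V)).PairwiseDisjoint Sym2.toFinset := fun _ he₁ _ he₂ hne =>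
  disjoint_left.2 fun _ hv₁ hv₂ =>
    hne (hM.eq_of_mem_of_mem he₁ he₂ (Sym2.mem_toFinset.1 hv₁) (Sym2.mem_toFinset.1 hv₂))

theorem card_eq_two_mul [Fintype V] (hM : PerfM G ↑M) : Fintype.card V = 2 * #M := by
  classical
  have hunion : M.biUnion Sym2.toFinset = univ := eq_univ_of_forall fun v => by
    obtain ⟨e, he, hv⟩ := (hM.2 v).exists
    exact mem_biUnion.2 ⟨e, he, Sym2.mem_toFinset.2 hv⟩
  rw [← card_univ, ← hunion, card_biUnion hM.pairwiseDisjoint_toFinset,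
    sum_congr rfl fun e he => Sym2.card_toFinset_of_not_isDiag e
      (G.not_isDiag_of_mem_edgeSet (hM.1 he)), sum_const, smul_eq_mul, mul_comm]

theorem forall_notMem_of_mem_sdiff [DecidableEq V] (hM : PerfM G ↑M) {F : Finset (Sym2 V)}
    (hF : F ⊆ M) {e : Sym2 V} (he : e ∈ M \ F) : ∀ v ∈ e, ∀ f ∈ F, v ∉ f := fun _ hv _ hf hvf =>
  (mem_sdiff.1 he).2 (hM.eq_of_mem_of_mem (mem_sdiff.1 he).1 (hF hf) hv hvf ▸ hf)

end PerfM

namespace GF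

variable {V : Type*} {G : SimpleGraph V} {F : Finset (Sym2 V)}
  {X : Finset ({v : V // ∀ e ∈ F, v ∉ e} ⊕ V)}

theorem exists_mem_toLeft (hX : (GF G F).IsVertexCover ↑X) {e : Sym2 V} (he : e ∈ G.edgeSet)
    (heF : ∀ v ∈ e, ∀ f ∈ F, v ∉ f) :
    ∃ v ∈ X.toLeft, ↑v ∈ e := by
  induction e using Sym2.ind with
  | _ a b =>
    rcases hX (v := .inl ⟨a, heF a (by simp)⟩) (w := .inl ⟨b, heF b (by simp)⟩) he with h | h
    · exact ⟨_, mem_toLeft.2 h, by simp⟩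
    · exact ⟨_, mem_toLeft.2 h, by simp⟩

theorem exists_mem_toRight (hX : (GF G F).IsVertexCover ↑X) {e : Sym2 V}
    (he : e ∈ G.edgeSet) : ∃ v ∈ X.toRight, v ∈ e := by
  induction e using Sym2.ind with
  | _ a b =>
    rcases hX (v := .inr a) (w := .inr b) he with h | h
    · exact ⟨a, by simpa using h, by simp⟩
    · exact ⟨b, by simpa using h, by simp⟩

end GF

theorem eq_and_le_add_of_mul_add_le {a m L R k : ℕ} (ham : a ≤ m) (haL : a ≤ L) (hmR : m ≤ R)
    (hw : L * (k + 1) + R ≤ a * (k + 2) + k) : L = a ∧ R ≤ a + k := by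
  have hLa : L = a := by nlinarith
  subst hLa
  constructor <;> nlinarith

/-- If `X` is a vertex cover of `G^F` of weight at most `k_F = (n/2 - |F|)(k+2) + k`,
then `|X ∩ V₁^F| = n/2 - |F|` and `|X ∩ V₂^F| ≤ n/2 - |F| + k`. -/
theorem stmt16 {V : Type*} [Fintype V] (G : SimpleGraph V)
    (M F : Finset (Sym2 V)) (hM : PerfM G ↑M) (hF : F ⊆ M) (k : ℕ)
    (X : Finset ({v : V // ∀ e ∈ F, v ∉ e} ⊕ V))
    (hcover : ∀ x y, (GF G F).Adj x y → x ∈ X ∨ y ∈ X)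
    (hw : (∑ x ∈ X, Sum.elim (fun _ => k + 1) (fun _ => 1) x) ≤
        (Fintype.card V / 2 - F.card) * (k + 2) + k) :
    (X.filter (fun x => x.isLeft = true)).card = Fintype.card V / 2 - F.card ∧
    (X.filter (fun x => x.isRight = true)).card ≤ Fintype.card V / 2 - F.card + k := by
  classical
  have hX : (GF G F).IsVertexCover ↑X := fun _ _ h => hcover _ _ h
  have hhalf : Fintype.card V / 2 = M.card := by rw [hM.card_eq_two_mul]; omega
  have hL : (M \ F).card ≤ X.toLeft.card := by
    rw [← card_map (Function.Embedding.subtype _)]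
    refine (hM.pairwiseDisjoint_toFinset.subset (coe_subset.2 sdiff_subset))
      |>.card_le_card_of_forall_exists_mem _ fun e he => ?_
    simpa using GF.exists_mem_toLeft hX (hM.1 (mem_sdiff.1 he).1)
      (hM.forall_notMem_of_mem_sdiff hF he)
  have hR : M.card ≤ X.toRight.card :=
    hM.pairwiseDisjoint_toFinset.card_le_card_of_forall_exists_mem _ fun e he => by
      simpa using GF.exists_mem_toRight hX (hM.1 he)
  rw [card_sdiff_of_subset hF] at hL
  rw [sum_sum_eq_sum_toLeft_add_sum_toRight] at hw
  simp only [Sum.elim_inl, Sum.elim_inr, sum_const, smul_eq_mul, mul_one, hhalf] at hw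
  rw [card_filter_isLeft, card_filter_isRight, hhalf]
  exact eq_and_le_add_of_mul_add_le (Nat.sub_le _ _) hL hR (by linarith)
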